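/- In ℓ₂ ⊗̂_π ℓ₂, the sequence (eₙ ⊗ eₙ), where (eₙ) is the canonical orthonormal basis of ℓ₂, is isometrically equivalent to the canonical basis of ℓ₁; in particular it has no weakly convergent subsequence, even though (eₙ) is weakly null in ℓ₂. -/

import Mathlib

open Filter Topology NormedSpace

noncomputable section

namespace NormedSpace

/-- The old `NormedSpace.Dual` (removed from Mathlib): the topological dual `E →L[𝕜] 𝕜`
with the operator norm. -/
def Dual (𝕜 : Type*) [NontriviallyNormedField 𝕜] (E : Type*) [SeminormedAddCommGroup E]
    [NormedSpace 𝕜 E] : Type _ :=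
  E →L[𝕜] 𝕜

section DualInstances

variable (𝕜 : Type*) [NontriviallyNormedField 𝕜] (E : Type*) [SeminormedAddCommGroup E]
  [NormedSpace 𝕜 E]

instance : SeminormedAddCommGroup (Dual 𝕜 E) := ContinuousLinearMap.toSeminormedAddCommGroup

instance : NormedSpace 𝕜 (Dual 𝕜 E) := ContinuousLinearMap.toNormedSpace

instance : FunLike (Dual 𝕜 E) E 𝕜 := ContinuousLinearMap.funLike

instance : ContinuousLinearMapClass (Dual 𝕜 E) 𝕜 E 𝕜 := ContinuousLinearMap.continuousSemilinearMapClass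

end DualInstances

end NormedSpace

variable (X Y : Type*) [NormedAddCommGroup X] [NormedSpace ℝ X] [CompleteSpace X]
  [NormedAddCommGroup Y] [NormedSpace ℝ Y] [CompleteSpace Y]

/-- The space `B(X × Y)` of bounded bilinear forms on `X × Y`. -/
abbrev Bil := X →L[ℝ] Y →L[ℝ] ℝ

/-- The elementary tensor `x ⊗ y`, viewed as a functional on bounded bilinear
forms: `⟨x ⊗ y, B⟩ = B x y`. -/
def elemTensor (x : X) (y : Y) : Dual ℝ (Bil X Y) :=
  (ContinuousLinearMap.apply ℝ ℝ y).comp (ContinuousLinearMap.apply ℝ (Y →L[ℝ] ℝ) x)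

/-- The projective tensor product `X ⊗̂_π Y`: the closed linear span of the elementary
tensors inside `B(X × Y)*` (the induced dual norm is the projective norm, and the weak
topology of `X ⊗̂_π Y` is the topology `σ(X ⊗̂_π Y, B(X × Y))` inherited from the
weak-* topology of `B(X × Y)*`). -/
def ptp : Submodule ℝ (Dual ℝ (Bil X Y)) :=
  (Submodule.span ℝ {u | ∃ x y, u = elemTensor X Y x y}).topologicalClosure

/-- The approximation property: for every `ε > 0` and every compact set `K` there is
a finite-rank operator `T` with `‖T x - x‖ ≤ ε` on `K`. -/
def HasAP (Z : Type*) [NormedAddCommGroup Z] [NormedSpace ℝ Z] : Prop :=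
  ∀ ε : ℝ, 0 < ε → ∀ K : Set Z, IsCompact K →
    ∃ T : Z →L[ℝ] Z, FiniteDimensional ℝ (LinearMap.range (T : Z →ₗ[ℝ] Z)) ∧
      ∀ x ∈ K, ‖T x - x‖ ≤ ε

local notation "ℓ₂" => lp (fun _ : ℕ => ℝ) 2

/-!
The diagonal bilinear forms `B_ε(x, y) = ∑ εᵢ xᵢ yᵢ` with `|εᵢ| ≤ 1` have norm at most `1` and
take the value `ε_k` on `e_k ⊗ e_k`. Testing `∑ aₖ eₖ ⊗ eₖ` against `B_ε` with `ε = sign a` gives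
`‖∑ aₖ eₖ ⊗ eₖ‖ ≥ ∑ |aₖ|`, the reverse inequality being the triangle inequality. Along any
subsequence `e_{φ k} ⊗ e_{φ k}`, the form with `ε_{φ k} = (-1)ᵏ` yields the divergent sequence
`(-1)ᵏ`, so no subsequence is even weakly Cauchy. That `(eₙ)` itself is weakly null is Bessel's
inequality together with the Riesz representation.
-/

open Function

section ElemTensor

variable {X Y : Type*} [NormedAddCommGroup X] [NormedSpace ℝ X]
  [NormedAddCommGroup Y] [NormedSpace ℝ Y]

theorem elemTensor_apply (x : X) (y : Y) (B : Bil X Y) : elemTensor X Y x y B = B x y := rfl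

theorem norm_elemTensor_le (x : X) (y : Y) : ‖elemTensor X Y x y‖ ≤ ‖x‖ * ‖y‖ :=
  ContinuousLinearMap.opNorm_le_bound _ (by positivity) fun B => by
    show ‖B x y‖ ≤ ‖x‖ * ‖y‖ * ‖B‖
    rw [mul_comm, ← mul_assoc]
    exact B.le_opNorm₂ x y

end ElemTensor

theorem not_tendsto_neg_one_pow (L : ℝ) : ¬ Tendsto (fun k : ℕ => (-1 : ℝ) ^ k) atTop (𝓝 L) := by
  intro h
  have h_succ : Tendsto (fun k : ℕ => -(-1 : ℝ) ^ k) atTop (𝓝 L) := by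
    simpa only [pow_succ, mul_neg_one] using (tendsto_add_atTop_iff_nat 1).2 h
  have hL : L = 0 := by linarith [tendsto_nhds_unique h_succ h.neg]
  have h_norm : Tendsto (fun k : ℕ => ‖(-1 : ℝ) ^ k‖) atTop (𝓝 ‖L‖) := h.norm
  simp only [norm_pow, norm_neg, norm_one, one_pow, hL, norm_zero] at h_norm
  exact one_ne_zero (tendsto_nhds_unique tendsto_const_nhds h_norm)

theorem Orthonormal.tendsto_cofinite_apply_zero {𝕜 E ι : Type*} [RCLike 𝕜]
    [NormedAddCommGroup E] [InnerProductSpace 𝕜 E] [CompleteSpace E] {v : ι → E}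
    (hv : Orthonormal 𝕜 v) (f : StrongDual 𝕜 E) : Tendsto (fun i => f (v i)) cofinite (𝓝 0) := by
  set x := (InnerProductSpace.toDual 𝕜 E).symm f
  have h_sq : Tendsto (fun i => ‖inner 𝕜 (v i) x‖ ^ 2) cofinite (𝓝 0) :=
    (hv.inner_products_summable x).tendsto_cofinite_zero
  have h_norm : Tendsto (fun i => ‖inner 𝕜 (v i) x‖) cofinite (𝓝 0) := by
    simpa only [Real.sqrt_sq (norm_nonneg _), Real.sqrt_zero] using h_sq.sqrt
  rw [tendsto_zero_iff_norm_tendsto_zero]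
  simpa only [x, ← InnerProductSpace.toDual_symm_apply, norm_inner_symm] using h_norm

namespace lp

variable {ι : Type*}

theorem orthonormal_single (𝕜 : Type*) [RCLike 𝕜] [DecidableEq ι] :
    Orthonormal 𝕜 (fun i => lp.single 2 i (1 : 𝕜) : ι → ℓ²(ι, 𝕜)) := by
  rw [orthonormal_iff_ite]
  intro i j
  rw [lp.inner_single_left, lp.single_apply, Pi.single_apply]
  split_ifs <;> simp_all

/-- The diagonal bilinear form `(x, y) ↦ ∑' i, ε i * x i * y i`. -/
def diagonalForm (ε : ι → ℝ) (hε : ∀ i, ‖ε i‖ ≤ 1) : Bil ℓ²(ι, ℝ) ℓ²(ι, ℝ) :=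
  dualPairing 2 2 (fun i => ε i • ContinuousLinearMap.mul ℝ ℝ) (K := 1) fun i => by
    rw [NNReal.coe_one]
    exact (ContinuousLinearMap.opNorm_smul_le (ε i) (ContinuousLinearMap.mul ℝ ℝ)).trans
      (mul_le_one₀ (hε i) (norm_nonneg _) (ContinuousLinearMap.opNorm_mul_le ℝ ℝ))

theorem norm_diagonalForm_le (ε : ι → ℝ) (hε : ∀ i, ‖ε i‖ ≤ 1) : ‖diagonalForm ε hε‖ ≤ 1 :=
  norm_dualPairing _ _

variable [DecidableEq ι]

theorem diagonalForm_single_single (ε : ι → ℝ) (hε : ∀ i, ‖ε i‖ ≤ 1) (k : ι) :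
    diagonalForm ε hε (lp.single 2 k 1) (lp.single 2 k 1) = ε k := by
  rw [diagonalForm, dualPairing_apply, tsum_eq_single k]
  · simp
  · intro i hi
    simp [lp.single_apply, hi]

theorem sum_smul_elemTensor_single_apply_diagonalForm (s : Finset ι) (a ε : ι → ℝ)
    (hε : ∀ i, ‖ε i‖ ≤ 1) :
    (∑ i ∈ s, a i • elemTensor ℓ²(ι, ℝ) ℓ²(ι, ℝ) (lp.single 2 i 1) (lp.single 2 i 1) :
      Dual ℝ (Bil ℓ²(ι, ℝ) ℓ²(ι, ℝ))) (diagonalForm ε hε) = ∑ i ∈ s, a i * ε i := by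
  refine (map_sum (ContinuousLinearMap.apply ℝ ℝ (diagonalForm ε hε)) _ s).trans
    (Finset.sum_congr rfl fun i _ => ?_)
  exact congrArg (a i * ·) (diagonalForm_single_single ε hε i)

theorem norm_sum_smul_elemTensor_single (s : Finset ι) (a : ι → ℝ) :
    ‖(∑ i ∈ s, a i • elemTensor ℓ²(ι, ℝ) ℓ²(ι, ℝ) (lp.single 2 i 1) (lp.single 2 i 1) :
      Dual ℝ (Bil ℓ²(ι, ℝ) ℓ²(ι, ℝ)))‖ = ∑ i ∈ s, |a i| := by
  set u : Dual ℝ (Bil ℓ²(ι, ℝ) ℓ²(ι, ℝ)) :=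
    ∑ i ∈ s, a i • elemTensor ℓ²(ι, ℝ) ℓ²(ι, ℝ) (lp.single 2 i 1) (lp.single 2 i 1)
  refine le_antisymm ?_ ?_
  · refine (norm_sum_le _ _).trans (Finset.sum_le_sum fun i _ => ?_)
    rw [norm_smul, Real.norm_eq_abs]
    refine mul_le_of_le_one_right (abs_nonneg _) ((norm_elemTensor_le _ _).trans ?_)
    simp [lp.norm_single]
  · have hsign : ∀ i, ‖(SignType.sign (a i) : ℝ)‖ ≤ 1 := fun i => by
      rcases lt_trichotomy (a i) 0 with h | h | h <;> simp [h]
    calc ∑ i ∈ s, |a i| = u (diagonalForm _ hsign) := by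
          rw [sum_smul_elemTensor_single_apply_diagonalForm]
          simp only [self_mul_sign]
      _ ≤ ‖u‖ * ‖diagonalForm _ hsign‖ := (le_abs_self _).trans (u.le_opNorm _)
      _ ≤ ‖u‖ := mul_le_of_le_one_right (norm_nonneg _) (norm_diagonalForm_le _ _)

theorem not_forall_exists_tendsto_elemTensor_single {φ : ℕ → ι} (hφ : Injective φ) :
    ¬ ∀ B : Bil ℓ²(ι, ℝ) ℓ²(ι, ℝ), ∃ L, Tendsto (fun k =>
      elemTensor ℓ²(ι, ℝ) ℓ²(ι, ℝ) (lp.single 2 (φ k) 1) (lp.single 2 (φ k) 1) B) atTop (𝓝 L) := by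
  intro h
  set ε : ι → ℝ := extend φ (fun k => (-1) ^ k) 0
  have hε : ∀ i, ‖ε i‖ ≤ 1 := by
    intro i
    by_cases hi : ∃ k, φ k = i
    · obtain ⟨k, rfl⟩ := hi
      simp [ε, hφ.extend_apply]
    · simp [ε, extend_apply' _ _ _ hi]
  obtain ⟨L, hL⟩ := h (diagonalForm ε hε)
  refine not_tendsto_neg_one_pow L ?_
  simpa only [elemTensor_apply, diagonalForm_single_single, ε, hφ.extend_apply] using hL

end lp

/-- in `ℓ₂ ⊗̂_π ℓ₂` the sequence `(eₙ ⊗ eₙ)` is isometrically equivalent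
to the canonical basis of `ℓ₁` (`‖Σ aₙ eₙ ⊗ eₙ‖_π = Σ |aₙ|` for finitely supported
scalars); in particular it has no weakly convergent subsequence, although `(eₙ)` is
weakly null in `ℓ₂`. -/
theorem diagonal_tensor_basis_isometric_l1 (e : ℕ → ℓ₂)
    (he : ∀ n, e n = lp.single 2 n (1 : ℝ)) :
    (∀ a : ℕ →₀ ℝ,
      ‖(∑ n ∈ a.support, a n • elemTensor ℓ₂ ℓ₂ (e n) (e n) : Dual ℝ (Bil ℓ₂ ℓ₂))‖
        = ∑ n ∈ a.support, |a n|) ∧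
    (¬ ∃ φ : ℕ → ℕ, StrictMono φ ∧ ∃ u : Dual ℝ (Bil ℓ₂ ℓ₂), u ∈ ptp ℓ₂ ℓ₂ ∧
      ∀ B : Bil ℓ₂ ℓ₂,
        Tendsto (fun k => elemTensor ℓ₂ ℓ₂ (e (φ k)) (e (φ k)) B) atTop (𝓝 (u B))) ∧
    (∀ f : ℓ₂ →L[ℝ] ℝ, Tendsto (fun n => f (e n)) atTop (𝓝 0)) := by
  obtain rfl : e = fun n => lp.single 2 n (1 : ℝ) := funext he
  refine ⟨fun a => lp.norm_sum_smul_elemTensor_single a.support a, ?_, fun f => ?_⟩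
  · rintro ⟨φ, hφ, u, -, hu⟩
    exact lp.not_forall_exists_tendsto_elemTensor_single hφ.injective fun B => ⟨u B, hu B⟩
  · rw [← Nat.cofinite_eq_atTop]
    exact (lp.orthonormal_single ℝ).tendsto_cofinite_apply_zero f
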